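/- arXiv:2209.09428 — 4 statements merged into one kernel-verified Lean document; each statement's English description precedes it below -/
import Mathlib

section
/- Let f : [0,∞) → ℝ be a twice continuously differentiable function satisfying f''(x) + f'(x) ≤ 1 and |f(x)| ≤ A for all x ≥ 0, where A > 1 is a fixed constant. Then f'(x) ≥ -5A for all x ≥ 0. -/
/-!
Write `c = f'(a)`. Since `(eʸ (f'(y) - 1))' = eʸ (f'' + f' - 1) ≤ 0`, we get
`f'(y) ≤ 1 + e^{a-y} (c - 1)` for `y ≥ a`, and integrating over `[a, a + 1]` gives
`f(a + 1) - f(a) ≤ 1 + (c - 1)(1 - e⁻¹)`. The left side is at least `-2A` and `1 - e⁻¹ > 1/2`,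
so `c < -5A` would force `(1 + 5A)/2 < 1 + 2A`, i.e. `A < 1`.
-/

open Real Set

theorem antitoneOn_exp_mul_sub_one {u : ℝ → ℝ} {a : ℝ} (hu : Differentiable ℝ u)
    (h : ∀ y, a ≤ y → deriv u y + u y ≤ 1) :
    AntitoneOn (fun y ↦ exp y * (u y - 1)) (Ici a) := by
  have hderiv : ∀ y, HasDerivAt (fun y ↦ exp y * (u y - 1))
      (exp y * (deriv u y + u y - 1)) y := fun y ↦ by
    refine ((hasDerivAt_exp y).mul ((hu y).hasDerivAt.sub_const 1)).congr_deriv ?_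
    ring
  refine antitoneOn_of_deriv_nonpos (convex_Ici a)
    (fun y _ ↦ (hderiv y).continuousAt.continuousWithinAt)
    (fun y _ ↦ (hderiv y).differentiableAt.differentiableWithinAt) fun y hy ↦ ?_
  rw [interior_Ici] at hy
  rw [(hderiv y).deriv]
  exact mul_nonpos_of_nonneg_of_nonpos (exp_pos y).le (by linarith [h y (le_of_lt hy)])

theorem le_one_add_exp_sub_mul_of_deriv_add_le_one {u : ℝ → ℝ} {a : ℝ}
    (hu : Differentiable ℝ u) (h : ∀ y, a ≤ y → deriv u y + u y ≤ 1) {y : ℝ} (hy : a ≤ y) :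
    u y ≤ 1 + exp (a - y) * (u a - 1) := by
  have hmono := antitoneOn_exp_mul_sub_one hu h self_mem_Ici hy hy
  have hdiv : u y - 1 ≤ exp a * (u a - 1) / exp y := by
    rw [le_div_iff₀ (exp_pos y)]
    linarith
  rw [exp_sub]
  calc u y ≤ 1 + exp a * (u a - 1) / exp y := by linarith
    _ = 1 + exp a / exp y * (u a - 1) := by ring

theorem sub_le_of_deriv_le_one_add_exp {f : ℝ → ℝ} {a b c : ℝ} (hf : Differentiable ℝ f)
    (hab : a ≤ b) (h : ∀ y, a ≤ y → deriv f y ≤ 1 + exp (a - y) * (c - 1)) :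
    f b - f a ≤ b - a + (c - 1) * (1 - exp (a - b)) := by
  set B : ℝ → ℝ := fun y ↦ f a + (y - a) + (c - 1) * (1 - exp (a - y))
  have hB : ∀ y, HasDerivAt B (1 + exp (a - y) * (c - 1)) y := fun y ↦ by
    have hexp := ((hasDerivAt_id y).const_sub a).exp
    refine ((((hasDerivAt_id y).sub_const a).const_add (f a)).add
      ((hexp.const_sub 1).const_mul (c - 1))).congr_deriv ?_
    simp only [id]
    ring
  have hfB : f b ≤ B b :=
    image_le_of_deriv_right_le_deriv_boundary hf.continuous.continuousOn
      (fun y _ ↦ (hf y).hasDerivAt.hasDerivWithinAt) (by simp [B])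
      (fun y _ ↦ (hB y).continuousAt.continuousWithinAt)
      (fun y _ ↦ (hB y).hasDerivWithinAt) (fun y hy ↦ h y hy.1) ⟨hab, le_rfl⟩
  simp only [B] at hfB
  linarith

theorem sub_le_of_deriv_deriv_add_deriv_le_one {f : ℝ → ℝ} {a b : ℝ} (hf : ContDiff ℝ 2 f)
    (h : ∀ y, a ≤ y → deriv (deriv f) y + deriv f y ≤ 1) (hab : a ≤ b) :
    f b - f a ≤ b - a + (deriv f a - 1) * (1 - exp (a - b)) := by
  have hf' : Differentiable ℝ (deriv f) :=
    (hf.iterate_deriv' 1 1).differentiable one_ne_zero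
  exact sub_le_of_deriv_le_one_add_exp (hf.differentiable two_ne_zero) hab
    fun y hy ↦ le_one_add_exp_sub_mul_of_deriv_add_le_one hf' h hy

theorem stmt_0 (f : ℝ → ℝ) (A : ℝ) (hA : 1 < A)
    (hf : ContDiff ℝ 2 f)
    (hineq : ∀ x, 0 ≤ x → deriv (deriv f) x + deriv f x ≤ 1)
    (hbd : ∀ x, 0 ≤ x → |f x| ≤ A) :
    ∀ x, 0 ≤ x → -5 * A ≤ deriv f x := by
  intro x hx
  have hstep := sub_le_of_deriv_deriv_add_deriv_le_one hf
    (fun y hy ↦ hineq y (hx.trans hy)) (le_add_of_nonneg_right zero_le_one : x ≤ x + 1)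
  rw [show x - (x + 1) = -1 by ring] at hstep
  have hfx := abs_le.mp (hbd x hx)
  have hfx1 := abs_le.mp (hbd (x + 1) (by linarith))
  have he := exp_neg_one_lt_half
  by_contra! hlt
  nlinarith
end

section
/- Let φ : [0,∞) → [0,∞) be a non-increasing function, and suppose there exist constants C > 0 and δ > 0 such that r·φ(s + r) ≤ C·φ(s)^{1+δ} for all s ≥ 0 and all r > 0. Suppose moreover φ(s₀)^δ ≤ 1/(2C) for some s₀ ≥ 0. Then φ(s) = 0 for all s > s₀ + 1/(1 - 2^{-δ}). -/
/-!
With `θ = 2^(-δ)`, climb from `s₀` along the levels `s₀ + 1 + θ + ⋯ + θ^(k-1)`, which stay below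
`s₀ + 1/(1 - θ)`. Going up one level with step `r = θ^k` halves `φ` as long as
`φ^δ ≤ r/(2C)`, and halving `φ` multiplies `φ^δ` by exactly `θ`, so this smallness condition
propagates from `k = 0` (the hypothesis on `s₀`) to every `k`. Hence `φ ≤ φ(s₀)/2^k` beyond every
level, and `φ = 0` past their supremum.
-/

open Finset Filter Topology

noncomputable def deGiorgiLevel (s₀ θ : ℝ) (k : ℕ) : ℝ :=
  s₀ + ∑ i ∈ range k, θ ^ i

lemma deGiorgiLevel_succ (s₀ θ : ℝ) (k : ℕ) :
    deGiorgiLevel s₀ θ (k + 1) = deGiorgiLevel s₀ θ k + θ ^ k := by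
  simp only [deGiorgiLevel, sum_range_succ, add_assoc]

lemma le_deGiorgiLevel {θ : ℝ} (s₀ : ℝ) (hθ : 0 ≤ θ) (k : ℕ) : s₀ ≤ deGiorgiLevel s₀ θ k :=
  le_add_of_nonneg_right (sum_nonneg fun i _ => pow_nonneg hθ i)

lemma deGiorgiLevel_le {θ : ℝ} (s₀ : ℝ) (hθ₀ : 0 ≤ θ) (hθ₁ : θ < 1) (k : ℕ) :
    deGiorgiLevel s₀ θ k ≤ s₀ + 1 / (1 - θ) := by
  have h := geom_sum_Ico_le_of_lt_one (m := 0) (n := k) hθ₀ hθ₁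
  rw [← range_eq_Ico, pow_zero] at h
  exact add_le_add_right h s₀

lemma le_half_of_mul_le_mul_rpow {C δ a b r : ℝ} (hC : 0 < C) (hδ : 0 ≤ δ) (ha : 0 ≤ a)
    (hr : 0 < r) (hstep : r * b ≤ C * a ^ (1 + δ)) (hsmall : a ^ δ ≤ r / (2 * C)) :
    b ≤ a / 2 := by
  have hsplit : a ^ (1 + δ) = a * a ^ δ := Real.rpow_one_add' ha (by linarith)
  have : r * b ≤ r * (a / 2) :=
    calc r * b ≤ C * (a * a ^ δ) := hsplit ▸ hstep
      _ ≤ C * (a * (r / (2 * C))) := by gcongr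
      _ = r * (a / 2) := by field_simp
  exact le_of_mul_le_mul_left this hr

lemma mul_inv_two_pow_rpow {a : ℝ} (ha : 0 ≤ a) (δ : ℝ) (k : ℕ) :
    (a * 2⁻¹ ^ k) ^ δ = a ^ δ * ((2 : ℝ) ^ (-δ)) ^ k := by
  rw [Real.mul_rpow ha (by positivity), ← Real.rpow_pow_comm (by norm_num),
    Real.inv_rpow zero_le_two, Real.rpow_neg zero_le_two]

lemma apply_deGiorgiLevel_le {φ : ℝ → ℝ} {C δ s₀ : ℝ} (hC : 0 < C) (hδ : 0 < δ)
    (hnonneg : ∀ s, 0 ≤ s → 0 ≤ φ s)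
    (hiter : ∀ s, 0 ≤ s → ∀ r, 0 < r → r * φ (s + r) ≤ C * φ s ^ (1 + δ))
    (hs₀ : 0 ≤ s₀) (hsmall : φ s₀ ^ δ ≤ 1 / (2 * C)) (k : ℕ) :
    φ (deGiorgiLevel s₀ (2 ^ (-δ)) k) ≤ φ s₀ * 2⁻¹ ^ k := by
  set θ : ℝ := 2 ^ (-δ)
  have hθ : 0 < θ := by positivity
  induction k with
  | zero => simp [deGiorgiLevel]
  | succ k ih =>
    have hlevel : 0 ≤ deGiorgiLevel s₀ θ k := hs₀.trans (le_deGiorgiLevel s₀ hθ.le k)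
    have hφ : 0 ≤ φ (deGiorgiLevel s₀ θ k) := hnonneg _ hlevel
    have hsmall_k : φ (deGiorgiLevel s₀ θ k) ^ δ ≤ θ ^ k / (2 * C) :=
      calc φ (deGiorgiLevel s₀ θ k) ^ δ ≤ (φ s₀ * 2⁻¹ ^ k) ^ δ := by gcongr
        _ = φ s₀ ^ δ * θ ^ k := mul_inv_two_pow_rpow (hnonneg s₀ hs₀) δ k
        _ ≤ 1 / (2 * C) * θ ^ k := by gcongr
        _ = θ ^ k / (2 * C) := by ring
    have hhalf := le_half_of_mul_le_mul_rpow hC hδ.le hφ (pow_pos hθ k)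
      (hiter _ hlevel _ (pow_pos hθ k)) hsmall_k
    rw [deGiorgiLevel_succ]
    calc _ ≤ φ (deGiorgiLevel s₀ θ k) / 2 := hhalf
      _ ≤ φ s₀ * 2⁻¹ ^ k / 2 := by gcongr
      _ = φ s₀ * 2⁻¹ ^ (k + 1) := by ring

theorem stmt_2 (φ : ℝ → ℝ) (C δ s₀ : ℝ) (hC : 0 < C) (hδ : 0 < δ)
    (hnonneg : ∀ s, 0 ≤ s → 0 ≤ φ s)
    (hmono : AntitoneOn φ (Set.Ici 0))
    (hiter : ∀ s, 0 ≤ s → ∀ r, 0 < r → r * φ (s + r) ≤ C * φ s ^ (1 + δ))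
    (hs₀ : 0 ≤ s₀) (hsmall : φ s₀ ^ δ ≤ 1 / (2 * C)) :
    ∀ s, s₀ + 1 / (1 - (2 : ℝ) ^ (-δ)) < s → φ s = 0 := by
  intro s hs
  set θ : ℝ := 2 ^ (-δ)
  have hθ₀ : 0 ≤ θ := by positivity
  have hθ₁ : θ < 1 := Real.rpow_lt_one_of_one_lt_of_neg one_lt_two (neg_neg_of_pos hδ)
  have hlevel_lt k : deGiorgiLevel s₀ θ k < s := (deGiorgiLevel_le s₀ hθ₀ hθ₁ k).trans_lt hs
  have hlevel_nonneg k : 0 ≤ deGiorgiLevel s₀ θ k := hs₀.trans (le_deGiorgiLevel s₀ hθ₀ k)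
  have hs_nonneg : 0 ≤ s := (hlevel_nonneg 0).trans (hlevel_lt 0).le
  have hbound k : φ s ≤ φ s₀ * 2⁻¹ ^ k :=
    (hmono (hlevel_nonneg k) hs_nonneg (hlevel_lt k).le).trans
      (apply_deGiorgiLevel_le hC hδ hnonneg hiter hs₀ hsmall k)
  have hlim : Tendsto (fun k : ℕ => φ s₀ * 2⁻¹ ^ k) atTop (𝓝 0) := by
    simpa using (tendsto_pow_atTop_nhds_zero_of_lt_one (r := (2⁻¹ : ℝ)) (by norm_num)
      (by norm_num)).const_mul (φ s₀)
  exact le_antisymm (ge_of_tendsto' hlim hbound) (hnonneg s hs_nonneg)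
end

section
/- Let φ : [0,∞) → [0,∞) be non-increasing with φ(s) ≤ 1/s for all s > 0, and suppose r·φ(s + r) ≤ C·φ(s)^{1+δ} for all s ≥ 0, r > 0, with C, δ > 0. Then φ(s) = 0 for all s > (2C)^{1/δ} + 1/(1 - 2^{-δ}). -/
/-!
De Giorgi iteration. Put `B = (2C)^{1/δ}`, `θ = 2^{-δ}` and `sₙ = B + ∑_{k<n} θ^k`. Chebyshev gives
`φ(s₀) ≤ 1/B`, and the iteration inequality with `r = θⁿ` turns `φ(sₙ) ≤ 2⁻ⁿ/B` into
`φ(sₙ₊₁) ≤ 2⁻⁽ⁿ⁺¹⁾/B`: the factor `θ⁻ⁿ = 2^{nδ}` lost by the small step is exactly recovered by the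
extra power `(2⁻ⁿ)^δ`, and `C B^{-δ} = 1/2`. Since `sₙ` increases to `B + 1/(1 - θ)`, monotonicity
gives `φ(s) ≤ 2⁻ⁿ/B` for every `n` beyond that point, so `φ(s) = 0`.
-/

open Finset

lemma div_two_pow_rpow_one_add {M : ℝ} (hM : 0 ≤ M) (δ : ℝ) (n : ℕ) :
    (M / 2 ^ n) ^ (1 + δ) = M ^ (1 + δ) / 2 ^ n * ((2 : ℝ) ^ (-δ)) ^ n := by
  have h2n : (0 : ℝ) < 2 ^ n := by positivity
  rw [Real.div_rpow hM h2n.le, Real.rpow_add h2n, Real.rpow_one, Real.rpow_neg zero_le_two,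
    inv_pow, ← Real.rpow_mul_natCast zero_le_two, mul_comm δ, Real.rpow_natCast_mul zero_le_two]
  ring

lemma le_div_two_pow_succ_of_le_div_two_pow {φ : ℝ → ℝ} {C δ M s : ℝ} {n : ℕ}
    (hC : 0 ≤ C) (hδ : 0 ≤ δ) (hM : 0 ≤ M) (hCM : 2 * C * M ^ δ ≤ 1)
    (hφs₀ : 0 ≤ φ s) (hφs : φ s ≤ M / 2 ^ n)
    (hstep : ((2 : ℝ) ^ (-δ)) ^ n * φ (s + ((2 : ℝ) ^ (-δ)) ^ n) ≤ C * φ s ^ (1 + δ)) :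
    φ (s + ((2 : ℝ) ^ (-δ)) ^ n) ≤ M / 2 ^ (n + 1) := by
  set r := ((2 : ℝ) ^ (-δ)) ^ n
  have hr : 0 < r := pow_pos (Real.rpow_pos_of_pos two_pos _) n
  refine le_of_mul_le_mul_left ?_ hr
  calc r * φ (s + r) ≤ C * φ s ^ (1 + δ) := hstep
    _ ≤ C * (M / 2 ^ n) ^ (1 + δ) := by gcongr
    _ = (C * M ^ δ) * (M / 2 ^ n * r) := by
      rw [div_two_pow_rpow_one_add hM, Real.rpow_add' hM (by linarith), Real.rpow_one]; ring
    _ ≤ 1 / 2 * (M / 2 ^ n * r) := by gcongr; linarith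
    _ = r * (M / 2 ^ (n + 1)) := by ring

lemma le_div_two_pow_of_iter {φ : ℝ → ℝ} {C δ M s₀ : ℝ}
    (hC : 0 ≤ C) (hδ : 0 ≤ δ) (hM : 0 ≤ M) (hCM : 2 * C * M ^ δ ≤ 1) (hs₀ : 0 ≤ s₀)
    (hnonneg : ∀ s, 0 ≤ s → 0 ≤ φ s)
    (hiter : ∀ s, 0 ≤ s → ∀ r, 0 < r → r * φ (s + r) ≤ C * φ s ^ (1 + δ))
    (hφs₀ : φ s₀ ≤ M) (n : ℕ) :
    φ (s₀ + ∑ k ∈ range n, ((2 : ℝ) ^ (-δ)) ^ k) ≤ M / 2 ^ n := by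
  have hθ : 0 < (2 : ℝ) ^ (-δ) := Real.rpow_pos_of_pos two_pos _
  induction n with
  | zero => simpa using hφs₀
  | succ n ih =>
    have hsn : 0 ≤ s₀ + ∑ k ∈ range n, ((2 : ℝ) ^ (-δ)) ^ k := by positivity
    rw [sum_range_succ, ← add_assoc]
    exact le_div_two_pow_succ_of_le_div_two_pow hC hδ hM hCM (hnonneg _ hsn) ih
      (hiter _ hsn _ (pow_pos hθ n))

lemma eq_zero_of_le_div_two_pow {x M : ℝ} (hx : 0 ≤ x) (h : ∀ n : ℕ, x ≤ M / 2 ^ n) : x = 0 := by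
  have hlim : Filter.Tendsto (fun n : ℕ => M / 2 ^ n) Filter.atTop (nhds 0) := by
    simpa [div_eq_mul_inv] using
      (tendsto_inv_atTop_zero.comp (tendsto_pow_atTop_atTop_of_one_lt one_lt_two)).const_mul M
  exact le_antisymm (ge_of_tendsto' hlim h) hx

theorem stmt_3 (φ : ℝ → ℝ) (C δ : ℝ) (hC : 0 < C) (hδ : 0 < δ)
    (hnonneg : ∀ s, 0 ≤ s → 0 ≤ φ s)
    (hmono : AntitoneOn φ (Set.Ici 0))
    (hdecay : ∀ s : ℝ, 0 < s → φ s ≤ 1 / s)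
    (hiter : ∀ s, 0 ≤ s → ∀ r, 0 < r → r * φ (s + r) ≤ C * φ s ^ (1 + δ)) :
    ∀ s, (2 * C) ^ (1 / δ) + 1 / (1 - (2 : ℝ) ^ (-δ)) < s → φ s = 0 := by
  intro s hs
  set B := (2 * C) ^ (1 / δ)
  set θ := (2 : ℝ) ^ (-δ)
  have hB : 0 < B := Real.rpow_pos_of_pos (by positivity) _
  have hθ : 0 < θ := Real.rpow_pos_of_pos two_pos _
  have hθ1 : θ < 1 := Real.rpow_lt_one_of_one_lt_of_neg one_lt_two (neg_neg_of_pos hδ)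
  have hCB : 2 * C * (1 / B) ^ δ = 1 := by
    rw [Real.div_rpow zero_le_one hB.le, Real.one_rpow, ← Real.rpow_mul (by positivity),
      one_div_mul_cancel hδ.ne', Real.rpow_one]
    field_simp
  have hsn : ∀ n, B + ∑ k ∈ range n, θ ^ k ≤ s := fun n => by
    have := geom_sum_Ico_le_of_lt_one (m := 0) (n := n) hθ.le hθ1
    rw [← range_eq_Ico, pow_zero] at this
    linarith
  have hs₀ : 0 ≤ s := hB.le.trans (by simpa using hsn 0)
  refine eq_zero_of_le_div_two_pow (M := 1 / B) (hnonneg s hs₀) fun n => ?_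
  have hsn₀ : 0 ≤ B + ∑ k ∈ range n, θ ^ k := by positivity
  exact (hmono hsn₀ hs₀ (hsn n)).trans <| le_div_two_pow_of_iter hC.le hδ.le (by positivity)
    hCB.le hB.le hnonneg hiter (hdecay B hB) n
end

section
/- Let (X,g) be a compact connected Riemannian manifold with volume V, and suppose its Green's function satisfies ∫_X |∇_y G(x,y)| dV(y) ≤ C for all x ∈ X. Then diam(X,g) ≤ 2C. -/
open MeasureTheory

theorem dist_le_two_mul_of_forall_lipschitz_abs_sub_le {X : Type*} [PseudoMetricSpace X]
    (A : (X → ℝ) → ℝ) (C : ℝ) (h : ∀ (x : X) (f : X → ℝ), LipschitzWith 1 f → |f x - A f| ≤ C)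
    (x y : X) : dist x y ≤ 2 * C := by
  have hf : LipschitzWith 1 (dist x) := LipschitzWith.dist_right x
  have hx := h x (dist x) hf
  have hy := h y (dist x) hf
  rw [dist_self] at hx
  linarith [(abs_le.mp hx).1, (abs_le.mp hy).2]

theorem diam_univ_le_two_mul_of_forall_lipschitz_abs_sub_le {X : Type*} [PseudoMetricSpace X]
    (A : (X → ℝ) → ℝ) {C : ℝ} (hC : 0 ≤ C)
    (h : ∀ (x : X) (f : X → ℝ), LipschitzWith 1 f → |f x - A f| ≤ C) :
    Metric.diam (Set.univ : Set X) ≤ 2 * C :=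
  Metric.diam_le_of_forall_dist_le (by positivity) fun x _ y _ ↦
    dist_le_two_mul_of_forall_lipschitz_abs_sub_le A C h x y

theorem stmt_10_general {X : Type*} [MetricSpace X] [MeasurableSpace X]
    (μ : Measure X) (V C : ℝ)
    (hC : 0 < C)
    (gnorm : X → X → ℝ)
    (hrep : ∀ (x : X) (f : X → ℝ), LipschitzWith 1 f →
      |f x - (1 / V) * ∫ y, f y ∂μ| ≤ ∫ y, gnorm x y ∂μ)
    (hG : ∀ x, ∫ y, gnorm x y ∂μ ≤ C) :
    Metric.diam (Set.univ : Set X) ≤ 2 * C :=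
  diam_univ_le_two_mul_of_forall_lipschitz_abs_sub_le (fun f ↦ (1 / V) * ∫ y, f y ∂μ) hC.le
    fun x f hf ↦ (hrep x f hf).trans (hG x)

theorem stmt_10 {X : Type*} [MetricSpace X] [MeasurableSpace X]
    (μ : Measure X) [IsFiniteMeasure μ] (V C : ℝ)
    (hV : V = (μ Set.univ).toReal) (hVpos : 0 < V) (hC : 0 < C)
    (gnorm : X → X → ℝ)
    (hrep : ∀ (x : X) (f : X → ℝ), LipschitzWith 1 f →
      |f x - (1 / V) * ∫ y, f y ∂μ| ≤ ∫ y, gnorm x y ∂μ)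
    (hG : ∀ x, ∫ y, gnorm x y ∂μ ≤ C) :
    Metric.diam (Set.univ : Set X) ≤ 2 * C :=
  stmt_10_general μ V C hC gnorm hrep hG
end
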